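/- Let α be any weak composition. Then the underlying diagram of snow(D(α)) equals the union over all dark clouds (r,c) ∈ dark(α) of the hooks ([r] × {c}) ∪ ({r} × [c]), where [n] = {1,...,n}. -/

import Mathlib

open scoped Classical

noncomputable section

/-- A weak composition: a finitely supported sequence of naturals.  Indices are
thought of as positive integers; index `0` is required to satisfy `α 0 = 0`. -/
abbrev WeakComp := ℕ →₀ ℕ

/-- A weak composition is snowy if its positive entries are pairwise distinct. -/
def Snowy (α : WeakComp) : Prop :=
  ∀ r r', 0 < α r → α r = α r' → r = r'

/-- The key diagram of a weak composition: the left-justified diagram with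
`α r` cells in row `r` (columns `1, …, α r`). -/
def keyDiagram (α : WeakComp) : Finset (ℕ × ℕ) :=
  α.support.biUnion fun r => (Finset.Icc 1 (α r)).image fun c => (r, c)

/-- Largest row index occurring in a diagram. -/
def rowBound (D : Finset (ℕ × ℕ)) : ℕ := (D.image Prod.fst).sup id

/-- One step of the snow-diagram algorithm: in row `r`, mark as a dark cloud the
rightmost cell of `D` whose column contains no dark cloud of `S` yet. -/
def darkStep (D S : Finset (ℕ × ℕ)) (r : ℕ) : Finset (ℕ × ℕ) :=
  let cols := (D.filter fun p => p.1 = r ∧ ∀ q ∈ S, q.2 ≠ p.2).image Prod.snd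
  if h : cols.Nonempty then insert (r, cols.max' h) S else S

/-- Process rows `N, N-1, …, N-k+1` from bottom to top. -/
def darkAux (D : Finset (ℕ × ℕ)) (N : ℕ) : ℕ → Finset (ℕ × ℕ)
  | 0 => ∅
  | k + 1 => darkStep D (darkAux D N k) (N - k)

/-- The dark cloud diagram of a diagram `D`: iterate the rows of `D` from bottom
to top, marking in each row the rightmost cell whose column contains no dark
cloud from a lower row. -/
def dark (D : Finset (ℕ × ℕ)) : Finset (ℕ × ℕ) := darkAux D (rowBound D) (rowBound D)

/-- The underlying diagram of the snow diagram of `D`: the cells of `D` together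
with all (snowflake) positions above a dark cloud in its column. -/
def snow (D : Finset (ℕ × ℕ)) : Finset (ℕ × ℕ) :=
  D ∪ (dark D).biUnion fun p => (Finset.Icc 1 p.1).image fun r => (r, p.2)

/-- `rajcode` of a diagram: the number of cells in row `r` of its snow diagram. -/
def rajcodeD (D : Finset (ℕ × ℕ)) (r : ℕ) : ℕ :=
  ((snow D).filter fun p => p.1 = r).card

/-- `raj` of a diagram: the total number of cells of its snow diagram. -/
def rajD (D : Finset (ℕ × ℕ)) : ℕ := (snow D).card

/-- `rajcode` of a weak composition. -/
def rajcode (α : WeakComp) (r : ℕ) : ℕ := rajcodeD (keyDiagram α) r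

/-- `raj` of a weak composition. -/
def raj (α : WeakComp) : ℕ := rajD (keyDiagram α)

/-- Non-attacking rook diagram: a finite subset of `ℤ_{>0} × ℤ_{>0}` with at
most one cell in each row and at most one cell in each column. -/
def IsRook (R : Finset (ℕ × ℕ)) : Prop :=
  (∀ p ∈ R, 1 ≤ p.1 ∧ 1 ≤ p.2) ∧
    ∀ p ∈ R, ∀ q ∈ R, (p.1 = q.1 ∨ p.2 = q.2) → p = q

/-- The sum `|α|` of the entries of a weak composition. -/
def wsum (α : WeakComp) : ℕ := α.sum fun _ v => v

/-- The number of pairs `(r, r')` with `1 ≤ r < r'` and `α r < α r'`. -/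
def invCount (α : WeakComp) : ℕ :=
  ((Finset.Icc 1 (α.support.sup id) ×ˢ α.support).filter fun p =>
      p.1 < p.2 ∧ α p.1 < α p.2).card

/-- Swap entries `i` and `i+1` of a weak composition. -/
def swapEntries (i : ℕ) (α : WeakComp) : WeakComp :=
  Finsupp.equivMapDomain (Equiv.swap i (i + 1)) α

/-- The Rothe diagram of `w ∈ S_n`, in 1-based coordinates:
`{(r, w(r')) : r < r', w(r) > w(r')}`. -/
def rothe {n : ℕ} (w : Equiv.Perm (Fin n)) : Finset (ℕ × ℕ) :=
  (Finset.univ.filter fun p : Fin n × Fin n => p.1 < p.2 ∧ w p.2 < w p.1).image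
    fun p => ((p.1 : ℕ) + 1, (w p.2 : ℕ) + 1)

/-- Length of the longest increasing subsequence of `w` starting at position `r`
(equivalently, starting with the value `w r`). -/
def LISfrom {n : ℕ} (w : Equiv.Perm (Fin n)) (r : Fin n) : ℕ :=
  Finset.sup (Finset.univ.filter fun s : Finset (Fin n) =>
      r ∈ s ∧ (∀ i ∈ s, r ≤ i) ∧ ∀ i ∈ s, ∀ j ∈ s, i < j → w i < w j)
    Finset.card

/-- Insert `x` into a strictly decreasing row: replace the largest entry `< x`
(returning it as bumped), or append `x` at the end. -/
def insertRow : List ℕ → ℕ → List ℕ × Option ℕ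
  | [], x => ([x], none)
  | a :: t, x =>
      if a < x then (x :: t, some a)
      else (a :: (insertRow t x).1, (insertRow t x).2)

/-- The 1-based value of `w` at 0-based position `i` (0 if out of range). -/
def oneline {n : ℕ} (w : Equiv.Perm (Fin n)) (i : ℕ) : ℕ :=
  if h : i < n then (w ⟨i, h⟩ : ℕ) + 1 else 0

/-- Row one of the Schensted insertion tableau after the first `k` insertions of
the values `w(n), w(n-1), …` (1-based values, inserted from the last position). -/
def rowOneAux {n : ℕ} (w : Equiv.Perm (Fin n)) : ℕ → List ℕ
  | 0 => []
  | k + 1 => (insertRow (rowOneAux w k) (oneline w (n - 1 - k))).1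

/-- The value bumped from row one when the value `w r` is inserted (during the
Schensted insertion of `w(n), …, w(1)` into the empty tableau); `none` if `w r`
is appended at the end of row one. -/
def bumpedFromRowOne {n : ℕ} (w : Equiv.Perm (Fin n)) (r : Fin n) : Option ℕ :=
  (insertRow (rowOneAux w (n - 1 - (r : ℕ))) (oneline w (r : ℕ))).2

/-- Position `i` starts a maximal decreasing run of `u` (in one-line notation). -/
def IsRunStart {n : ℕ} (u : Equiv.Perm (Fin n)) (i : Fin n) : Prop :=
  ∀ j : Fin n, (j : ℕ) + 1 = (i : ℕ) → u j < u i

/-- A fireworks permutation: the initial elements of its maximal decreasing runs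
are increasing. -/
def Fireworks {n : ℕ} (u : Equiv.Perm (Fin n)) : Prop :=
  ∀ i j : Fin n, IsRunStart u i → IsRunStart u j → i < j → u i < u j

/-- An inverse fireworks permutation. -/
def InverseFireworks {n : ℕ} (w : Equiv.Perm (Fin n)) : Prop := Fireworks w⁻¹

/-- The `n`-th Bell number: the number of set partitions (equivalence relations)
of an `n`-element set. -/
def bell (n : ℕ) : ℕ := Nat.card (Setoid (Fin n))

/-- The staircase board `Stair_n = {(r,c) : 1 ≤ r ≤ n-1, 1 ≤ c ≤ n-r}`. -/
def stair (n : ℕ) : Finset (ℕ × ℕ) :=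
  (Finset.Icc 1 n ×ˢ Finset.Icc 1 n).filter fun p => p.1 ≤ n - 1 ∧ p.2 ≤ n - p.1

/-- All cells weakly above a rook of `R` in its column, or weakly to the left of
a rook of `R` in its row. -/
def hooks (R : Finset (ℕ × ℕ)) : Finset (ℕ × ℕ) :=
  R.biUnion fun p =>
    ((Finset.Icc 1 p.1).image fun r => (r, p.2)) ∪
      ((Finset.Icc 1 p.2).image fun c => (p.1, c))

/-- The Northwest number `NW(R)`. -/
def NW (R : Finset (ℕ × ℕ)) : ℕ := (hooks R).card

/-- The Garsia–Remmel statistic: the number of cells of `Stair_n` that are not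
weakly above a rook in its column and not weakly to the left of a rook in its
row. -/
def GRcount (n : ℕ) (R : Finset (ℕ × ℕ)) : ℕ :=
  ((stair n).filter fun q =>
      ¬ ∃ p ∈ R, (p.2 = q.2 ∧ q.1 ≤ p.1) ∨ (p.1 = q.1 ∧ q.2 ≤ p.2)).card

/-- Garsia–Remmel `q`-Stirling numbers of the second kind. -/
def qStirling : ℕ → ℕ → Polynomial ℤ
  | 0, 0 => 1
  | 0, _ + 1 => 0
  | _ + 1, 0 => 0
  | n + 1, k + 1 =>
      Polynomial.X ^ k * qStirling n k +
        (∑ i ∈ Finset.range (k + 1), Polynomial.X ^ i) * qStirling n (k + 1)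

/-- The `q`-Bell polynomial `B_n(q) = Σ_{k=0}^n S_{n,k}(q)`. -/
def qBell (n : ℕ) : Polynomial ℤ := ∑ k ∈ Finset.range (n + 1), qStirling n k

/-- Tail lexicographic order on exponent vectors: `γ < α` iff there is `k` with
`γ k < α k` and `γ j = α j` for all `j > k`. -/
def TailLt (γ α : ℕ →₀ ℕ) : Prop :=
  ∃ k, γ k < α k ∧ ∀ j, k < j → γ j = α j


/-!
When row `r` is processed, a cell `p` of that row either already has a cloud of a lower row in
its column, or it is eligible and the cloud chosen in row `r` lies weakly to its right; so every
cell of `D` lies in a hook of a dark cloud. Conversely the vertical arms of the hooks are the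
snowflakes, and the horizontal arms lie in `D` because a dark cloud is a cell of `D` and `D` is
left-justified.
-/

section SnowDiagram

variable {D : Finset (ℕ × ℕ)}

lemma mem_keyDiagram {α : WeakComp} {p : ℕ × ℕ} :
    p ∈ keyDiagram α ↔ 1 ≤ p.2 ∧ p.2 ≤ α p.1 := by
  simp only [keyDiagram, Finset.mem_biUnion, Finset.mem_image, Finset.mem_Icc,
    Finsupp.mem_support_iff]
  constructor
  · rintro ⟨r, -, c, hc, rfl⟩
    exact hc
  · rintro hp
    exact ⟨p.1, by omega, p.2, hp, rfl⟩

def columnSegment (q : ℕ × ℕ) : Finset (ℕ × ℕ) := (Finset.Icc 1 q.1).image fun r => (r, q.2)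

def rowSegment (q : ℕ × ℕ) : Finset (ℕ × ℕ) := (Finset.Icc 1 q.2).image fun c => (q.1, c)

lemma mem_columnSegment {p q : ℕ × ℕ} :
    p ∈ columnSegment q ↔ 1 ≤ p.1 ∧ p.1 ≤ q.1 ∧ p.2 = q.2 := by
  obtain ⟨a, b⟩ := p
  simp only [columnSegment, Finset.mem_image, Finset.mem_Icc, Prod.mk.injEq]
  constructor
  · rintro ⟨r, hr, rfl, rfl⟩
    exact ⟨hr.1, hr.2, rfl⟩
  · rintro ⟨h1, h2, rfl⟩
    exact ⟨a, ⟨h1, h2⟩, rfl, rfl⟩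

lemma mem_rowSegment {p q : ℕ × ℕ} :
    p ∈ rowSegment q ↔ p.1 = q.1 ∧ 1 ≤ p.2 ∧ p.2 ≤ q.2 := by
  obtain ⟨a, b⟩ := p
  simp only [rowSegment, Finset.mem_image, Finset.mem_Icc, Prod.mk.injEq]
  constructor
  · rintro ⟨c, hc, rfl, rfl⟩
    exact ⟨rfl, hc.1, hc.2⟩
  · rintro ⟨rfl, h1, h2⟩
    exact ⟨b, ⟨h1, h2⟩, rfl, rfl⟩

lemma mem_darkStep {S : Finset (ℕ × ℕ)} {r : ℕ} {q : ℕ × ℕ} (hq : q ∈ darkStep D S r) :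
    q ∈ S ∨ (q ∈ D ∧ q.1 = r) := by
  unfold darkStep at hq
  dsimp only at hq
  split at hq
  next h =>
    rcases Finset.mem_insert.mp hq with rfl | hqS
    · obtain ⟨x, hx, hx2⟩ := Finset.mem_image.mp (Finset.max'_mem _ h)
      simp only [Finset.mem_filter] at hx
      obtain ⟨hxD, hx1, -⟩ := hx
      have : x = (r, _) := Prod.ext hx1 hx2
      exact Or.inr ⟨this ▸ hxD, rfl⟩
    · exact Or.inl hqS
  next => exact Or.inl hq

lemma subset_darkStep (S : Finset (ℕ × ℕ)) (r : ℕ) : S ⊆ darkStep D S r := by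
  unfold darkStep
  dsimp only
  split
  next => exact Finset.subset_insert _ _
  next => exact Finset.Subset.refl _

lemma exists_darkStep_right_of {S : Finset (ℕ × ℕ)} {p : ℕ × ℕ} (hp : p ∈ D)
    (hcol : ∀ q ∈ S, q.2 ≠ p.2) : ∃ q ∈ darkStep D S p.1, q.1 = p.1 ∧ p.2 ≤ q.2 := by
  have hmem : p.2 ∈ (D.filter fun x => x.1 = p.1 ∧ ∀ q ∈ S, q.2 ≠ x.2).image Prod.snd := by
    simp only [Finset.mem_image, Finset.mem_filter]
    exact ⟨p, ⟨hp, rfl, hcol⟩, rfl⟩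
  unfold darkStep
  dsimp only
  rw [dif_pos ⟨p.2, hmem⟩]
  exact ⟨_, Finset.mem_insert_self _ _, rfl, Finset.le_max' _ _ hmem⟩

lemma mem_and_sub_lt_of_mem_darkAux {N k : ℕ} (hk : k ≤ N) {q : ℕ × ℕ}
    (hq : q ∈ darkAux D N k) : q ∈ D ∧ N - k < q.1 := by
  induction k with
  | zero => simp [darkAux] at hq
  | succ k ih =>
    rcases mem_darkStep hq with hq | ⟨hqD, hq1⟩
    · obtain ⟨hqD, hq1⟩ := ih (by omega) hq
      exact ⟨hqD, by omega⟩
    · exact ⟨hqD, by omega⟩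

lemma exists_darkAux_hook {N k : ℕ} (hk : k ≤ N) {p : ℕ × ℕ} (hp : p ∈ D)
    (hpN : p.1 ≤ N) (hpk : N - k < p.1) :
    ∃ q ∈ darkAux D N k, (q.2 = p.2 ∧ p.1 ≤ q.1) ∨ (q.1 = p.1 ∧ p.2 ≤ q.2) := by
  induction k with
  | zero => omega
  | succ k ih =>
    show ∃ q ∈ darkStep D (darkAux D N k) (N - k), _
    by_cases hlow : N - k < p.1
    · obtain ⟨q, hq, hhook⟩ := ih (by omega) hlow
      exact ⟨q, subset_darkStep _ _ hq, hhook⟩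
    have hrow : p.1 = N - k := by omega
    by_cases hcol : ∃ q ∈ darkAux D N k, q.2 = p.2
    · obtain ⟨q, hq, hq2⟩ := hcol
      have hq1 := (mem_and_sub_lt_of_mem_darkAux (by omega) hq).2
      exact ⟨q, subset_darkStep _ _ hq, Or.inl ⟨hq2, by omega⟩⟩
    · push Not at hcol
      rw [← hrow]
      obtain ⟨q, hq, hq1, hq2⟩ := exists_darkStep_right_of hp hcol
      exact ⟨q, hq, Or.inr ⟨hq1, hq2⟩⟩

lemma dark_subset : dark D ⊆ D := fun _ hq => (mem_and_sub_lt_of_mem_darkAux le_rfl hq).1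

lemma exists_dark_hook {p : ℕ × ℕ} (hp : p ∈ D) (hp1 : 1 ≤ p.1) :
    ∃ q ∈ dark D, (q.2 = p.2 ∧ p.1 ≤ q.1) ∨ (q.1 = p.1 ∧ p.2 ≤ q.2) := by
  have hpN : p.1 ≤ rowBound D := Finset.le_sup (f := id) (Finset.mem_image_of_mem Prod.fst hp)
  exact exists_darkAux_hook le_rfl hp hpN (by omega)

theorem snow_eq_hooks_dark (hpos : ∀ p ∈ D, 1 ≤ p.1 ∧ 1 ≤ p.2)
    (hleft : ∀ r c c', (r, c) ∈ D → 1 ≤ c' → c' ≤ c → (r, c') ∈ D) :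
    snow D = hooks (dark D) := by
  have hrows : (dark D).biUnion rowSegment ⊆ D := by
    refine Finset.biUnion_subset.mpr fun q hq p hp => ?_
    obtain ⟨hp1, hp2, hpq⟩ := mem_rowSegment.mp hp
    exact (Prod.ext hp1 rfl : p = (q.1, p.2)) ▸ hleft q.1 q.2 p.2 (dark_subset hq) hp2 hpq
  have hcover : D ⊆ (dark D).biUnion columnSegment ∪ (dark D).biUnion rowSegment := by
    intro p hp
    obtain ⟨q, hq, hhook⟩ := exists_dark_hook hp (hpos p hp).1
    simp only [Finset.mem_union, Finset.mem_biUnion, mem_columnSegment, mem_rowSegment]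
    rcases hhook with ⟨hcol, hle⟩ | ⟨hrow, hle⟩
    · exact Or.inl ⟨q, hq, (hpos p hp).1, hle, hcol.symm⟩
    · exact Or.inr ⟨q, hq, hrow.symm, (hpos p hp).2, hle⟩
  change D ∪ (dark D).biUnion columnSegment =
    (dark D).biUnion fun q => columnSegment q ∪ rowSegment q
  rw [Finset.biUnion_union]
  exact Finset.Subset.antisymm (Finset.union_subset hcover Finset.subset_union_left)
    (Finset.union_subset Finset.subset_union_right (hrows.trans Finset.subset_union_left))

end SnowDiagram

/-- the underlying diagram of `snow(D(α))` is the union of the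
hooks `([r] × {c}) ∪ ({r} × [c])` over dark clouds `(r,c)`. -/
theorem snow_eq_biUnion_hooks (α : WeakComp) (h0 : α 0 = 0) :
    snow (keyDiagram α) =
      (dark (keyDiagram α)).biUnion fun p =>
        ((Finset.Icc 1 p.1).image fun r => (r, p.2)) ∪
          ((Finset.Icc 1 p.2).image fun c => (p.1, c)) := by
  refine snow_eq_hooks_dark (fun p hp => ?_) (fun r c c' hc hc' hle => ?_)
  · obtain ⟨hp2, hpα⟩ := mem_keyDiagram.mp hp
    refine ⟨Nat.one_le_iff_ne_zero.mpr fun hp1 => ?_, hp2⟩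
    rw [hp1, h0] at hpα
    omega
  · exact mem_keyDiagram.mpr ⟨hc', hle.trans (mem_keyDiagram.mp hc).2⟩

end
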